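/- arXiv:2208.04463 — 7 statements merged into one kernel-verified Lean document; each statement's English description precedes it below -/
import Mathlib

section
/- Let R = R₀ ⊕ R₁ be a strongly Z₂-graded commutative ring (i.e. R₁² = R₀). Then R₁ is a multiplication R₀-module: every R₀-submodule R' of R₁ satisfies R' = (R' :_{R₀} R₁)·R₁. -/
/-- A `ℤ/2ℤ`-grading on a commutative ring `R`: additive subgroups `R0`, `R1` with
`R = R0 ⊕ R1` (internal direct sum) and `Rᵢ · Rⱼ ⊆ R_{i+j}`. -/
structure Z2Grading (R : Type*) [CommRing R] where
  R0 : AddSubgroup R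
  R1 : AddSubgroup R
  one_mem : (1 : R) ∈ R0
  mul_mem_00 : ∀ {a b : R}, a ∈ R0 → b ∈ R0 → a * b ∈ R0
  mul_mem_01 : ∀ {a b : R}, a ∈ R0 → b ∈ R1 → a * b ∈ R1
  mul_mem_11 : ∀ {a b : R}, a ∈ R1 → b ∈ R1 → a * b ∈ R0
  sup_eq_top : R0 ⊔ R1 = ⊤
  inf_eq_bot : R0 ⊓ R1 = ⊥

/-- The sum `S + T` of two subsets of `R`. -/
def setSum {R : Type*} [CommRing R] (S T : Set R) : Set R :=
  {z : R | ∃ a ∈ S, ∃ b ∈ T, z = a + b}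

/-- The additive subgroup of `R` generated by the pairwise products of `S` and `T`
(i.e. the product `S·T` of an ideal/submodule pair). -/
def mulSet {R : Type*} [CommRing R] (S T : Set R) : AddSubgroup R :=
  AddSubgroup.closure {x : R | ∃ a ∈ S, ∃ b ∈ T, x = a * b}

namespace Z2Grading

variable {R : Type*} [CommRing R] (G : Z2Grading R)

/-- The set of homogeneous elements of `R`, namely `R₀ ∪ R₁`. -/
def homogeneous : Set R := ↑G.R0 ∪ ↑G.R1

/-- `R₁²`, the ideal of `R₀` generated by the products of two elements of `R₁`. -/
def sq : AddSubgroup R := mulSet (↑G.R1) (↑G.R1)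

/-- `R₁³ = R₁² · R₁`, an `R₀`-submodule of `R₁`. -/
def cube : AddSubgroup R := mulSet (↑G.sq) (↑G.R1)

/-- `I` is an ideal of the subring `R₀` (viewed inside `R`). -/
def IsIdeal0 (I : AddSubgroup R) : Prop :=
  (I : Set R) ⊆ ↑G.R0 ∧ ∀ a ∈ G.R0, ∀ x ∈ I, a * x ∈ I

/-- `N` is an `R₀`-submodule of `R₁` (viewed inside `R`). -/
def IsSubmodule1 (N : AddSubgroup R) : Prop :=
  (N : Set R) ⊆ ↑G.R1 ∧ ∀ a ∈ G.R0, ∀ x ∈ N, a * x ∈ N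

/-- The residual `(N :_{R₀} R₁) = {a ∈ R₀ : a·R₁ ⊆ N}`. -/
def residual (N : AddSubgroup R) : AddSubgroup R where
  carrier := {a : R | a ∈ G.R0 ∧ ∀ r ∈ G.R1, a * r ∈ N}
  zero_mem' := ⟨G.R0.zero_mem, fun r _ => by simpa using N.zero_mem⟩
  add_mem' := by
    rintro a b ⟨ha0, ha⟩ ⟨hb0, hb⟩
    exact ⟨G.R0.add_mem ha0 hb0, fun r hr => by
      rw [add_mul]; exact N.add_mem (ha r hr) (hb r hr)⟩
  neg_mem' := by
    rintro a ⟨ha0, ha⟩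
    exact ⟨G.R0.neg_mem ha0, fun r hr => by
      rw [neg_mul]; exact N.neg_mem (ha r hr)⟩

/-- `J` is a `ℤ₂`-graded ideal of `R`: the homogeneous components of each of its
elements again belong to `J`, i.e. `J = (J ∩ R₀) ⊕ (J ∩ R₁)`. -/
def IsGradedIdeal (J : Ideal R) : Prop :=
  ∀ x ∈ J, ∃ a b : R, a ∈ G.R0 ∧ b ∈ G.R1 ∧ a ∈ J ∧ b ∈ J ∧ x = a + b

/-- `J` is a `ℤ₂`-graded prime ideal of `R`. -/
def IsGradedPrime (J : Ideal R) : Prop :=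
  G.IsGradedIdeal J ∧ J ≠ ⊤ ∧
    ∀ r ∈ G.homogeneous, ∀ s ∈ G.homogeneous, r * s ∈ J → r ∈ J ∨ s ∈ J

/-- `J` is a `ℤ₂`-graded maximal ideal of `R`. -/
def IsGradedMaximal (J : Ideal R) : Prop :=
  G.IsGradedIdeal J ∧ J ≠ ⊤ ∧
    ∀ J' : Ideal R, G.IsGradedIdeal J' → J ≤ J' → J' = J ∨ J' = ⊤

/-- `p` is a prime ideal of the subring `R₀`. -/
def IsPrime0 (p : AddSubgroup R) : Prop :=
  G.IsIdeal0 p ∧ (p : Set R) ≠ ↑G.R0 ∧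
    ∀ a ∈ G.R0, ∀ b ∈ G.R0, a * b ∈ p → a ∈ p ∨ b ∈ p

/-- `p` is a maximal ideal of the subring `R₀`. -/
def IsMaximal0 (p : AddSubgroup R) : Prop :=
  G.IsIdeal0 p ∧ (p : Set R) ≠ ↑G.R0 ∧
    ∀ I : AddSubgroup R, G.IsIdeal0 I → p ≤ I → (I : Set R) = ↑p ∨ (I : Set R) = ↑G.R0

/-- `N` is a prime `R₀`-submodule of `R₁`. -/
def IsPrimeSubmodule1 (N : AddSubgroup R) : Prop :=
  G.IsSubmodule1 N ∧ (N : Set R) ≠ ↑G.R1 ∧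
    ∀ a ∈ G.R0, ∀ m ∈ G.R1, a * m ∈ N → a ∈ G.residual N ∨ m ∈ N

/-- `N` is a maximal (proper) `R₀`-submodule of `R₁`. -/
def IsMaximalSubmodule1 (N : AddSubgroup R) : Prop :=
  G.IsSubmodule1 N ∧ (N : Set R) ≠ ↑G.R1 ∧
    ∀ N' : AddSubgroup R, G.IsSubmodule1 N' → N ≤ N' →
      (N' : Set R) = ↑N ∨ (N' : Set R) = ↑G.R1

/-- `R` is a `ℤ₂`-graded integral domain. -/
def IsGradedDomain : Prop :=
  (1 : R) ≠ 0 ∧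
    ∀ r ∈ G.homogeneous, ∀ s ∈ G.homogeneous, r * s = 0 → r = 0 ∨ s = 0

/-- `R` is a `ℤ₂`-graded field. -/
def IsGradedField : Prop :=
  (1 : R) ≠ 0 ∧ ∀ r ∈ G.homogeneous, r ≠ 0 → IsUnit r

/-- `R₀` as a subring of `R`. -/
def toSubring : Subring R where
  carrier := ↑G.R0
  one_mem' := G.one_mem
  mul_mem' := fun ha hb => G.mul_mem_00 ha hb
  zero_mem' := G.R0.zero_mem
  add_mem' := fun ha hb => G.R0.add_mem ha hb
  neg_mem' := fun ha => G.R0.neg_mem ha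

/-- The Zariski topology on the homogeneous spectrum `Z₂Spec R`: closed sets are the
`V(I) = {P : I ⊆ P}` for `ℤ₂`-graded ideals `I`. -/
def gradedZariski : TopologicalSpace {Q : Ideal R // G.IsGradedPrime Q} :=
  TopologicalSpace.generateFrom
    {U : Set {Q : Ideal R // G.IsGradedPrime Q} |
      ∃ I : Ideal R, G.IsGradedIdeal I ∧ U = {P | ¬ I ≤ P.1}}

end Z2Grading

/-! Since `1 ∈ R₁²`, an element `x ∈ R'` is a sum of terms `x * (b * c) = (c * x) * b` with
`b, c ∈ R₁`, and `c * x` lies in the residual because `(c * x) * r = (c * r) * x` with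
`c * r ∈ R₀`. -/

namespace Z2Grading

variable {R : Type*} [CommRing R] (G : Z2Grading R)

theorem mulSet_residual_le (N : AddSubgroup R) : mulSet ↑(G.residual N) ↑G.R1 ≤ N := by
  rw [mulSet, AddSubgroup.closure_le]
  rintro _ ⟨a, ha, b, hb, rfl⟩
  exact ha.2 b hb

variable {G}

theorem IsSubmodule1.mul_mem_residual {N : AddSubgroup R} (hN : G.IsSubmodule1 N)
    {c x : R} (hc : c ∈ G.R1) (hx : x ∈ N) : c * x ∈ G.residual N := by
  refine ⟨G.mul_mem_11 hc (hN.1 hx), fun r hr => ?_⟩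
  rw [mul_right_comm]
  exact hN.2 _ (G.mul_mem_11 hc hr) _ hx

theorem IsSubmodule1.mul_mem_mulSet_residual_of_mem_sq {N : AddSubgroup R}
    (hN : G.IsSubmodule1 N) {x u : R} (hx : x ∈ N) (hu : u ∈ G.sq) :
    x * u ∈ mulSet ↑(G.residual N) ↑G.R1 := by
  suffices G.sq ≤ (mulSet ↑(G.residual N) ↑G.R1).comap (AddMonoidHom.mulLeft x) from this hu
  rw [sq, mulSet, AddSubgroup.closure_le]
  rintro _ ⟨b, hb, c, hc, rfl⟩
  have hcomm : x * (b * c) = c * x * b := by ring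
  rw [SetLike.mem_coe, AddSubgroup.mem_comap, AddMonoidHom.coe_mulLeft, hcomm]
  exact AddSubgroup.subset_closure ⟨c * x, hN.mul_mem_residual hc hx, b, hb, rfl⟩

theorem IsSubmodule1.le_mulSet_residual {N : AddSubgroup R} (hN : G.IsSubmodule1 N)
    (h1 : (1 : R) ∈ G.sq) : N ≤ mulSet ↑(G.residual N) ↑G.R1 := fun x hx => by
  simpa using hN.mul_mem_mulSet_residual_of_mem_sq hx h1

end Z2Grading

/-- if `R` is strongly `ℤ₂`-graded (`R₁² = R₀`) then `R₁` is a multiplication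
`R₀`-module: every `R₀`-submodule `R'` of `R₁` satisfies `R' = (R' :_{R₀} R₁)·R₁`. -/
theorem multiplication_module_of_strongly_graded {R : Type*} [CommRing R] (G : Z2Grading R)
    (hstr : (G.sq : Set R) = ↑G.R0) :
    ∀ N : AddSubgroup R, G.IsSubmodule1 N → N = mulSet (↑(G.residual N)) (↑G.R1) := by
  intro N hN
  have h1 : (1 : R) ∈ (G.sq : Set R) := hstr ▸ G.one_mem
  exact le_antisymm (hN.le_mulSet_residual h1) (G.mulSet_residual_le N)
end

section
/- Let R = R₀ ⊕ R₁ be a Z₂-graded commutative ring and Q a Z₂-graded ideal of R. Then Q is a Z₂-graded prime ideal of R if and only if either (1) Q = p + R₁ where p is a prime ideal of R₀ containing R₁², or (2) Q = (R' :_{R₀} R₁) + R' where R' is a prime R₀-submodule of R₁ with R₁³ ⊄ R'. -/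
section

variable {R : Type*} [CommRing R]

theorem left_mem_setSum {S T : AddSubgroup R} {a : R} (ha : a ∈ S) :
    a ∈ setSum (S : Set R) T :=
  ⟨a, ha, 0, T.zero_mem, (add_zero a).symm⟩

theorem right_mem_setSum {S T : AddSubgroup R} {b : R} (hb : b ∈ T) :
    b ∈ setSum (S : Set R) T :=
  ⟨0, S.zero_mem, b, hb, (zero_add b).symm⟩

theorem mul_mem_mulSet {S T : Set R} {a b : R} (ha : a ∈ S) (hb : b ∈ T) : a * b ∈ mulSet S T :=
  AddSubgroup.subset_closure ⟨a, ha, b, hb, rfl⟩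

theorem mulSet_le {S T : Set R} {H : AddSubgroup R}
    (h : ∀ a ∈ S, ∀ b ∈ T, a * b ∈ H) : mulSet S T ≤ H :=
  (AddSubgroup.closure_le H).mpr fun _ ⟨a, ha, b, hb, hab⟩ => hab ▸ h a ha b hb

end

namespace Z2Grading

variable {R : Type*} [CommRing R] (G : Z2Grading R)

def evenPart (Q : Ideal R) : AddSubgroup R := Q.toAddSubgroup ⊓ G.R0

def oddPart (Q : Ideal R) : AddSubgroup R := Q.toAddSubgroup ⊓ G.R1

variable {G}

theorem mem_residual {N : AddSubgroup R} {a : R} :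
    a ∈ G.residual N ↔ a ∈ G.R0 ∧ ∀ m ∈ G.R1, a * m ∈ N := Iff.rfl

theorem residual_le_R0 {N : AddSubgroup R} : G.residual N ≤ G.R0 := fun _ ha => ha.1

theorem disjoint_R0_R1 : Disjoint G.R0 G.R1 := disjoint_iff.mpr G.inf_eq_bot

theorem eq_zero_of_mem_R0_of_mem_R1 {x : R} (h0 : x ∈ G.R0) (h1 : x ∈ G.R1) : x = 0 :=
  AddSubgroup.disjoint_def.mp disjoint_R0_R1 h0 h1

theorem mem_left_of_mem_setSum_of_mem_R0 {S T : AddSubgroup R} (hS : (S : Set R) ⊆ G.R0)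
    (hT : (T : Set R) ⊆ G.R1) {x : R} (hx : x ∈ setSum (S : Set R) T) (hx0 : x ∈ G.R0) :
    x ∈ S := by
  obtain ⟨a, ha, b, hb, rfl⟩ := hx
  have hb0 : b ∈ G.R0 := by simpa using G.R0.sub_mem hx0 (hS ha)
  rwa [eq_zero_of_mem_R0_of_mem_R1 hb0 (hT hb), add_zero]

theorem mem_right_of_mem_setSum_of_mem_R1 {S T : AddSubgroup R} (hS : (S : Set R) ⊆ G.R0)
    (hT : (T : Set R) ⊆ G.R1) {x : R} (hx : x ∈ setSum (S : Set R) T) (hx1 : x ∈ G.R1) :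
    x ∈ T := by
  obtain ⟨a, ha, b, hb, rfl⟩ := hx
  have ha1 : a ∈ G.R1 := by simpa using G.R1.sub_mem hx1 (hT hb)
  rwa [eq_zero_of_mem_R0_of_mem_R1 (hS ha) ha1, zero_add]

theorem isGradedPrime_of_coe_eq_setSum {Q : Ideal R} {S T : AddSubgroup R}
    (hS : (S : Set R) ⊆ G.R0) (hT : (T : Set R) ⊆ G.R1) (hQ : (Q : Set R) = setSum S T)
    (h1 : (1 : R) ∉ S)
    (h00 : ∀ a ∈ G.R0, ∀ b ∈ G.R0, a * b ∈ S → a ∈ S ∨ b ∈ S)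
    (h01 : ∀ a ∈ G.R0, ∀ m ∈ G.R1, a * m ∈ T → a ∈ S ∨ m ∈ T)
    (h11 : ∀ m ∈ G.R1, ∀ n ∈ G.R1, m * n ∈ S → m ∈ T ∨ n ∈ T) :
    G.IsGradedPrime Q := by
  have mem_iff (x : R) : x ∈ Q ↔ x ∈ setSum (S : Set R) T := by rw [← SetLike.mem_coe, hQ]
  have mem0 {x : R} (hx : x ∈ G.R0) : x ∈ Q ↔ x ∈ S :=
    ⟨fun h => mem_left_of_mem_setSum_of_mem_R0 hS hT ((mem_iff x).mp h) hx,
      fun h => (mem_iff x).mpr (left_mem_setSum h)⟩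
  have mem1 {x : R} (hx : x ∈ G.R1) : x ∈ Q ↔ x ∈ T :=
    ⟨fun h => mem_right_of_mem_setSum_of_mem_R1 hS hT ((mem_iff x).mp h) hx,
      fun h => (mem_iff x).mpr (right_mem_setSum h)⟩
  refine ⟨?graded, ?proper, ?prime⟩
  case graded =>
    intro x hx
    obtain ⟨a, ha, b, hb, rfl⟩ := (mem_iff x).mp hx
    exact ⟨a, b, hS ha, hT hb, (mem0 (hS ha)).mpr ha, (mem1 (hT hb)).mpr hb, rfl⟩
  case proper =>
    exact fun htop => h1 ((mem0 G.one_mem).mp (htop ▸ Submodule.mem_top))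
  case prime =>
    rintro r (hr | hr) s (hs | hs) hrs
    · simpa only [mem0 hr, mem0 hs] using h00 r hr s hs ((mem0 (G.mul_mem_00 hr hs)).mp hrs)
    · simpa only [mem0 hr, mem1 hs] using h01 r hr s hs ((mem1 (G.mul_mem_01 hr hs)).mp hrs)
    · rw [mul_comm] at hrs
      simpa only [mem1 hr, mem0 hs, or_comm] using
        h01 s hs r hr ((mem1 (G.mul_mem_01 hs hr)).mp hrs)
    · simpa only [mem1 hr, mem1 hs] using h11 r hr s hs ((mem0 (G.mul_mem_11 hr hs)).mp hrs)

theorem IsIdeal0.one_notMem {p : AddSubgroup R} (hp : G.IsIdeal0 p) (hne : (p : Set R) ≠ G.R0) :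
    (1 : R) ∉ p :=
  fun h1 => hne (subset_antisymm hp.1 fun a ha => by simpa using hp.2 a ha 1 h1)

theorem one_notMem_residual {N : AddSubgroup R} (hN : (N : Set R) ⊆ G.R1)
    (hne : (N : Set R) ≠ G.R1) : (1 : R) ∉ G.residual N :=
  fun h1 => hne (subset_antisymm hN fun m hm => by simpa using h1.2 m hm)

theorem cube_le_of_sq_le_residual {N : AddSubgroup R} (h : G.sq ≤ G.residual N) :
    G.cube ≤ N :=
  mulSet_le fun _ ha b hb => (h ha).2 b hb

namespace IsPrimeSubmodule1

variable {N : AddSubgroup R}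

theorem residual_mem_or_mem (hN : G.IsPrimeSubmodule1 N) {a b : R} (ha : a ∈ G.R0)
    (hb : b ∈ G.R0) (hab : a * b ∈ G.residual N) : a ∈ G.residual N ∨ b ∈ G.residual N := by
  refine or_iff_not_imp_left.mpr fun ha' => ?_
  obtain ⟨m, hm, ham⟩ : ∃ m ∈ G.R1, a * m ∉ N := by simpa [mem_residual, ha] using ha'
  have hbam : b * (a * m) ∈ N := by
    rw [← mul_assoc, mul_comm b a]
    exact hab.2 m hm
  exact (hN.2.2 b hb _ (G.mul_mem_01 ha hm) hbam).resolve_right ham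

/-- Primality of `N` moves the product in the residual from `m * n` to `m * x`, and then to
`x * y`. -/
theorem sq_le_residual (hN : G.IsPrimeSubmodule1 N) {m n : R} (hm : m ∈ G.R1) (hn : n ∈ G.R1)
    (hmN : m ∉ N) (hnN : n ∉ N) (hmn : m * n ∈ G.residual N) : G.sq ≤ G.residual N := by
  have hmx : ∀ x ∈ G.R1, m * x ∈ G.residual N := by
    intro x hx
    have : m * x * n ∈ N := by
      rw [mul_right_comm]
      exact hmn.2 x hx
    exact (hN.2.2 _ (G.mul_mem_11 hm hx) n hn this).resolve_right hnN
  refine mulSet_le fun x hx y hy => ?_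
  have : x * y * m ∈ N := by
    rw [mul_comm, ← mul_assoc]
    exact (hmx x hx).2 y hy
  exact (hN.2.2 _ (G.mul_mem_11 hx hy) m hm this).resolve_right hmN

theorem mem_or_mem_of_mul_mem_residual (hN : G.IsPrimeSubmodule1 N)
    (hcube : ¬ (G.cube : Set R) ⊆ N) {m n : R} (hm : m ∈ G.R1) (hn : n ∈ G.R1)
    (hmn : m * n ∈ G.residual N) : m ∈ N ∨ n ∈ N := by
  by_contra! h
  exact hcube (cube_le_of_sq_le_residual (hN.sq_le_residual hm hn h.1 h.2 hmn))

end IsPrimeSubmodule1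

variable {Q : Ideal R}

theorem coe_eq_setSum_evenPart_oddPart (hQ : G.IsGradedIdeal Q) :
    (Q : Set R) = setSum (G.evenPart Q : Set R) (G.oddPart Q) := by
  ext x
  constructor
  · intro hx
    obtain ⟨a, b, ha0, hb1, haQ, hbQ, rfl⟩ := hQ x hx
    exact ⟨a, ⟨haQ, ha0⟩, b, ⟨hbQ, hb1⟩, rfl⟩
  · rintro ⟨a, ha, b, hb, rfl⟩
    exact Q.add_mem ha.1 hb.1

theorem isIdeal0_evenPart : G.IsIdeal0 (G.evenPart Q) :=
  ⟨fun _ hx => hx.2, fun a ha _ hx => ⟨Q.mul_mem_left a hx.1, G.mul_mem_00 ha hx.2⟩⟩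

theorem isSubmodule1_oddPart : G.IsSubmodule1 (G.oddPart Q) :=
  ⟨fun _ hx => hx.2, fun a ha _ hx => ⟨Q.mul_mem_left a hx.1, G.mul_mem_01 ha hx.2⟩⟩

theorem evenPart_le_residual_oddPart : G.evenPart Q ≤ G.residual (G.oddPart Q) :=
  fun _ ha => ⟨ha.2, fun m hm => ⟨Q.mul_mem_right m ha.1, G.mul_mem_01 ha.2 hm⟩⟩

theorem oddPart_eq_R1 (hR1 : (G.R1 : Set R) ⊆ Q) : G.oddPart Q = G.R1 :=
  inf_eq_right.mpr hR1

theorem sq_le_evenPart (hR1 : (G.R1 : Set R) ⊆ Q) : G.sq ≤ G.evenPart Q :=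
  mulSet_le fun a ha _ hb => ⟨Q.mul_mem_left a (hR1 hb), G.mul_mem_11 ha hb⟩

namespace IsGradedPrime

theorem isPrime0_evenPart (hQ : G.IsGradedPrime Q) : G.IsPrime0 (G.evenPart Q) := by
  refine ⟨isIdeal0_evenPart, fun h => hQ.2.1 ?_, fun a ha b hb hab => ?_⟩
  · have h1 : (1 : R) ∈ (G.evenPart Q : Set R) := h ▸ G.one_mem
    exact Q.eq_top_of_isUnit_mem h1.1 isUnit_one
  · exact (hQ.2.2 a (Or.inl ha) b (Or.inl hb) hab.1).imp (⟨·, ha⟩) (⟨·, hb⟩)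

variable {t : R}

theorem residual_oddPart_eq_evenPart (hQ : G.IsGradedPrime Q) (ht : t ∈ G.R1) (htQ : t ∉ Q) :
    G.residual (G.oddPart Q) = G.evenPart Q :=
  le_antisymm
    (fun a ha => ⟨(hQ.2.2 a (Or.inl ha.1) t (Or.inr ht) (ha.2 t ht).1).resolve_right htQ, ha.1⟩)
    evenPart_le_residual_oddPart

theorem isPrimeSubmodule1_oddPart (hQ : G.IsGradedPrime Q) (ht : t ∈ G.R1) (htQ : t ∉ Q) :
    G.IsPrimeSubmodule1 (G.oddPart Q) := by
  refine ⟨isSubmodule1_oddPart, fun h => htQ ?_, fun a ha m hm ham => ?_⟩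
  · have ht' : t ∈ (G.oddPart Q : Set R) := h ▸ ht
    exact ht'.1
  · rw [residual_oddPart_eq_evenPart hQ ht htQ]
    exact (hQ.2.2 a (Or.inl ha) m (Or.inr hm) ham.1).imp (⟨·, ha⟩) (⟨·, hm⟩)

theorem not_cube_subset_oddPart (hQ : G.IsGradedPrime Q) (ht : t ∈ G.R1) (htQ : t ∉ Q) :
    ¬ (G.cube : Set R) ⊆ G.oddPart Q := by
  intro hcube
  have htt : t * t ∉ Q := fun h =>
    htQ ((hQ.2.2 t (Or.inr ht) t (Or.inr ht) h).elim id id)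
  have httt : t * t * t ∈ Q := (hcube (mul_mem_mulSet (mul_mem_mulSet ht ht) ht)).1
  exact (hQ.2.2 _ (Or.inl (G.mul_mem_11 ht ht)) t (Or.inr ht) httt).elim htt htQ

end IsGradedPrime

end Z2Grading

open Z2Grading in
theorem graded_prime_iff_general {R : Type*} [CommRing R] (G : Z2Grading R) (Q : Ideal R) :
    G.IsGradedPrime Q ↔
      (∃ p : AddSubgroup R, G.IsPrime0 p ∧ (G.sq : Set R) ⊆ ↑p ∧
        (Q : Set R) = setSum ↑p ↑G.R1) ∨
      (∃ N : AddSubgroup R, G.IsPrimeSubmodule1 N ∧ ¬ ((G.cube : Set R) ⊆ ↑N) ∧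
        (Q : Set R) = setSum ↑(G.residual N) ↑N) := by
  constructor
  · intro hQ
    have hQ_eq := coe_eq_setSum_evenPart_oddPart hQ.1
    by_cases hR1 : (G.R1 : Set R) ⊆ Q
    · refine Or.inl ⟨G.evenPart Q, hQ.isPrime0_evenPart, sq_le_evenPart hR1, ?_⟩
      rwa [oddPart_eq_R1 hR1] at hQ_eq
    · obtain ⟨t, ht, htQ⟩ := Set.not_subset.mp hR1
      refine Or.inr ⟨G.oddPart Q, hQ.isPrimeSubmodule1_oddPart ht htQ,
        hQ.not_cube_subset_oddPart ht htQ, ?_⟩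
      rwa [hQ.residual_oddPart_eq_evenPart ht htQ]
  · rintro (⟨p, hp, -, hQ_eq⟩ | ⟨N, hN, hcube, hQ_eq⟩)
    · exact isGradedPrime_of_coe_eq_setSum hp.1.1 subset_rfl hQ_eq (hp.1.one_notMem hp.2.1)
        hp.2.2 (fun _ _ _ hm _ => Or.inr hm) (fun _ hm _ _ _ => Or.inl hm)
    · exact isGradedPrime_of_coe_eq_setSum residual_le_R0 hN.1.1 hQ_eq
        (one_notMem_residual hN.1.1 hN.2.1) (fun _ ha _ hb => hN.residual_mem_or_mem ha hb)
        hN.2.2 (fun _ hm _ hn => hN.mem_or_mem_of_mul_mem_residual hcube hm hn)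

/-- a `ℤ₂`-graded ideal `Q` is `ℤ₂`-graded prime iff either `Q = p + R₁` with
`p` a prime ideal of `R₀` containing `R₁²`, or `Q = (R' :_{R₀} R₁) + R'` with `R'` a prime
`R₀`-submodule of `R₁` such that `R₁³ ⊄ R'`. -/
theorem graded_prime_iff {R : Type*} [CommRing R] (G : Z2Grading R) (Q : Ideal R)
    (hQ : G.IsGradedIdeal Q) :
    G.IsGradedPrime Q ↔
      (∃ p : AddSubgroup R, G.IsPrime0 p ∧ (G.sq : Set R) ⊆ ↑p ∧
        (Q : Set R) = setSum ↑p ↑G.R1) ∨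
      (∃ N : AddSubgroup R, G.IsPrimeSubmodule1 N ∧ ¬ ((G.cube : Set R) ⊆ ↑N) ∧
        (Q : Set R) = setSum ↑(G.residual N) ↑N) :=
  graded_prime_iff_general G Q
end

section
/- Let R = R₀ ⊕ R₁ be a Z₂-graded commutative ring and p a prime ideal of R₀ with R₁² ⊄ p. Then (p·R₁ :_{R₀} R₁) = p. -/
theorem mulSet_le_iff {R : Type*} [CommRing R] {S T : Set R} {H : AddSubgroup R} :
    mulSet S T ≤ H ↔ ∀ a ∈ S, ∀ b ∈ T, a * b ∈ H := by
  refine (AddSubgroup.closure_le H).trans ⟨fun hST a ha b hb => hST ⟨a, ha, b, hb, rfl⟩, ?_⟩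
  rintro hST _ ⟨a, ha, b, hb, rfl⟩
  exact hST a ha b hb

namespace Z2Grading

variable {R : Type*} [CommRing R] (G : Z2Grading R)

theorem exists_mul_notMem_of_not_sq_le {p : AddSubgroup R} (h : ¬ G.sq ≤ p) :
    ∃ x ∈ G.R1, ∃ y ∈ G.R1, x * y ∉ p := by
  simpa [sq, mulSet_le_iff] using h

theorem mulSet_mul_mem {I : AddSubgroup R} (hI : G.IsIdeal0 I) {z r : R}
    (hz : z ∈ mulSet I G.R1) (hr : r ∈ G.R1) : z * r ∈ I := by
  suffices mulSet I G.R1 ≤ I.comap (AddMonoidHom.mulRight r) from this hz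
  refine mulSet_le_iff.2 fun a ha b hb => ?_
  simpa [mul_comm, mul_left_comm] using hI.2 (b * r) (G.mul_mem_11 hb hr) a ha

theorem le_residual_mulSet {I : AddSubgroup R} (hI : (I : Set R) ⊆ G.R0) :
    I ≤ G.residual (mulSet I G.R1) :=
  fun a ha => ⟨hI ha, fun r hr => AddSubgroup.subset_closure ⟨a, ha, r, hr, rfl⟩⟩

theorem residual_mulSet_le {p : AddSubgroup R} (hp : G.IsPrime0 p) {x y : R}
    (hx : x ∈ G.R1) (hy : y ∈ G.R1) (hxy : x * y ∉ p) :
    G.residual (mulSet p G.R1) ≤ p := by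
  rintro a ⟨ha0, ha⟩
  have haxy : a * (x * y) ∈ p := mul_assoc a x y ▸ G.mulSet_mul_mem hp.1 (ha x hx) hy
  exact (hp.2.2 a ha0 _ (G.mul_mem_11 hx hy) haxy).resolve_right hxy

end Z2Grading

/-- if `p` is a prime ideal of `R₀` with `R₁² ⊄ p`, then
`(p·R₁ :_{R₀} R₁) = p`. -/
theorem residual_smul_eq {R : Type*} [CommRing R] (G : Z2Grading R) (p : AddSubgroup R)
    (hp : G.IsPrime0 p) (h : ¬ ((G.sq : Set R) ⊆ ↑p)) :
    G.residual (mulSet (↑p) (↑G.R1)) = p := by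
  obtain ⟨x, hx, y, hy, hxy⟩ := G.exists_mul_notMem_of_not_sq_le h
  exact le_antisymm (G.residual_mulSet_le hp hx hy hxy) (G.le_residual_mulSet hp.1.1)
end

section
/- Let R = R₀ ⊕ R₁ be a Z₂-graded commutative ring. The map φ : Z₂Spec R → Spec R₀ given by φ(P) = P ∩ R₀ is a homeomorphism between the homogeneous spectrum of R and the prime spectrum of R₀, both equipped with their Zariski topologies. -/
/-!
The inverse of `P ↦ P ∩ R₀` sends a prime `p` of `R₀` to `p ⊕ {b ∈ R₁ : b R₁ ⊆ p}`, the set of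
`x` with `π₀(x R) ⊆ p` for the projection `π₀ : R → R₀`. If homogeneous `r, s` lie outside this
ideal, there are homogeneous `y, z` with `r y, s z ∈ R₀ \ p`, so `π₀(r s y z) = (r y)(s z) ∉ p`:
the ideal is graded prime. Conversely, an odd `b` lies in a graded prime `P` iff `b² ∈ P ∩ R₀`,
which recovers `P` from `P ∩ R₀`. The preimage of `D(a)` consists of the graded primes not
containing the graded ideal `a R`, and that of the complement of `V(I)` is the complement of
`V(π₀(I))`.
-/

namespace Z2Grading

variable {R : Type*} [CommRing R] (G : Z2Grading R)

lemma mul_mem_homogeneous {r s : R} (hr : r ∈ G.homogeneous) (hs : s ∈ G.homogeneous) :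
    r * s ∈ G.homogeneous := by
  rcases hr with hr | hr <;> rcases hs with hs | hs
  · exact Or.inl (G.mul_mem_00 hr hs)
  · exact Or.inr (G.mul_mem_01 hr hs)
  · exact Or.inr (mul_comm s r ▸ G.mul_mem_01 hs hr)
  · exact Or.inl (G.mul_mem_11 hr hs)

def R1Submodule : Submodule G.toSubring R where
  __ := G.R1
  smul_mem' a _ hx := G.mul_mem_01 a.2 hx

lemma isCompl_range_R1Submodule :
    IsCompl (LinearMap.range (Algebra.linearMap G.toSubring R)) G.R1Submodule := by
  constructor
  · rw [Submodule.disjoint_def]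
    rintro _ ⟨a, rfl⟩ ha
    have : (a : R) ∈ G.R0 ⊓ G.R1 := ⟨a.2, ha⟩
    rwa [G.inf_eq_bot, AddSubgroup.mem_bot] at this
  · rw [codisjoint_iff, eq_top_iff]
    intro x _
    have hx : x ∈ G.R0 ⊔ G.R1 := G.sup_eq_top ▸ AddSubgroup.mem_top x
    obtain ⟨a, ha, b, hb, rfl⟩ := AddSubgroup.mem_sup.mp hx
    exact Submodule.add_mem_sup ⟨⟨a, ha⟩, rfl⟩ hb

noncomputable def proj0 : R →ₗ[G.toSubring] G.toSubring :=
  LinearMap.linearProjOfIsCompl _ _ Subtype.val_injective G.isCompl_range_R1Submodule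

@[simp]
lemma proj0_coe (a : G.toSubring) : G.proj0 a = a :=
  LinearMap.linearProjOfIsCompl_apply_left _ _ _ _ a

lemma proj0_of_mem_R1 {b : R} (hb : b ∈ G.R1) : G.proj0 b = 0 :=
  LinearMap.linearProjOfIsCompl_apply_right' _ _ _ _ b hb

lemma ker_proj0 : LinearMap.ker G.proj0 = G.R1Submodule :=
  LinearMap.ker_linearProjOfIsCompl _ _ _ _

lemma sub_proj0_mem_R1 (x : R) : x - G.proj0 x ∈ G.R1 := by
  change _ ∈ G.R1Submodule
  rw [← G.ker_proj0, LinearMap.mem_ker, map_sub]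
  exact sub_eq_zero.mpr (G.proj0_coe _).symm

lemma proj0_mul (a : G.toSubring) (x : R) : G.proj0 (a * x) = a * G.proj0 x :=
  G.proj0.map_smul a x

lemma coe_proj0_mem_of_isGradedIdeal {J : Ideal R} (hJ : G.IsGradedIdeal J) {x : R}
    (hx : x ∈ J) : (G.proj0 x : R) ∈ J := by
  obtain ⟨a, b, ha, hb, haJ, -, rfl⟩ := hJ x hx
  simpa [G.proj0_of_mem_R1 hb] using G.proj0_coe ⟨a, ha⟩ ▸ haJ

lemma isGradedIdeal_span_singleton {a : R} (ha : a ∈ G.homogeneous) :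
    G.IsGradedIdeal (Ideal.span {a}) := by
  intro x hx
  obtain ⟨r, rfl⟩ := Ideal.mem_span_singleton'.mp hx
  have hr : r = G.proj0 r + (r - G.proj0 r) := by ring
  have h0 := Ideal.mul_mem_left _ (G.proj0 r : R) (Ideal.mem_span_singleton_self a)
  have h1 := Ideal.mul_mem_left _ (r - G.proj0 r) (Ideal.mem_span_singleton_self a)
  rw [hr, add_mul]
  rcases ha with ha | ha
  · exact ⟨_, _, G.mul_mem_00 (G.proj0 r).2 ha, mul_comm a _ ▸ G.mul_mem_01 ha
      (G.sub_proj0_mem_R1 r), h0, h1, rfl⟩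
  · exact ⟨_, _, G.mul_mem_11 (G.sub_proj0_mem_R1 r) ha, G.mul_mem_01 (G.proj0 r).2 ha, h1, h0,
      add_comm _ _⟩

lemma comap_isPrime {P : Ideal R} (hP : G.IsGradedPrime P) :
    (P.comap G.toSubring.subtype).IsPrime where
  ne_top' h := hP.2.1 <| P.eq_top_iff_one.mpr <| by
    simpa using (Ideal.eq_top_iff_one _).mp h
  mem_or_mem' {a b} hab := hP.2.2 a (Or.inl a.2) b (Or.inl b.2) hab

/-- The graded ideal `p ⊕ {b ∈ R₁ : b R₁ ⊆ p}` lying over an ideal `p` of `R₀`. -/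
def liftIdeal (p : Ideal G.toSubring) : Ideal R where
  carrier := {x | ∀ y, G.proj0 (x * y) ∈ p}
  zero_mem' y := by simp
  add_mem' hx hy z := by simpa [add_mul] using p.add_mem (hx z) (hy z)
  smul_mem' r x hx y := by
    rw [smul_eq_mul, mul_assoc, mul_left_comm]
    exact hx (r * y)

variable {G}

lemma coe_mem_liftIdeal {p : Ideal G.toSubring} {a : G.toSubring} :
    (a : R) ∈ G.liftIdeal p ↔ a ∈ p :=
  ⟨fun ha => by simpa using ha 1,
    fun ha y => by simpa [G.proj0_mul] using p.mul_mem_right (G.proj0 y) ha⟩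

lemma comap_liftIdeal (p : Ideal G.toSubring) :
    (G.liftIdeal p).comap G.toSubring.subtype = p :=
  Ideal.ext fun _ => coe_mem_liftIdeal

lemma isGradedIdeal_liftIdeal (p : Ideal G.toSubring) : G.IsGradedIdeal (G.liftIdeal p) := by
  intro x hx
  have h0 : (G.proj0 x : R) ∈ G.liftIdeal p := coe_mem_liftIdeal.mpr (by simpa using hx 1)
  exact ⟨_, _, (G.proj0 x).2, G.sub_proj0_mem_R1 x, h0, sub_mem hx h0, by ring⟩

lemma exists_proj0_mul_notMem_of_notMem_liftIdeal {p : Ideal G.toSubring} {x : R}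
    (hx : x ∉ G.liftIdeal p) : ∃ y ∈ G.homogeneous, G.proj0 (x * y) ∉ p := by
  contrapose! hx
  intro y
  have hy : y = G.proj0 y + (y - G.proj0 y) := by ring
  rw [hy, mul_add, map_add]
  exact p.add_mem (hx _ (Or.inl (G.proj0 y).2)) (hx _ (Or.inr (G.sub_proj0_mem_R1 y)))

lemma mem_R0_of_proj0_notMem {p : Ideal G.toSubring} {u : R} (hu : u ∈ G.homogeneous)
    (h : G.proj0 u ∉ p) : u ∈ G.R0 :=
  hu.resolve_right fun hu1 => h (G.proj0_of_mem_R1 hu1 ▸ p.zero_mem)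

lemma isGradedPrime_liftIdeal (p : Ideal G.toSubring) [p.IsPrime] :
    G.IsGradedPrime (G.liftIdeal p) := by
  refine ⟨isGradedIdeal_liftIdeal p, fun h => ?_, fun r hr s hs hrs => ?_⟩
  · exact Ideal.IsPrime.ne_top ‹_› (by rw [← comap_liftIdeal p, h, Ideal.comap_top])
  by_contra! h
  obtain ⟨y, hy, hry⟩ := exists_proj0_mul_notMem_of_notMem_liftIdeal h.1
  obtain ⟨z, hz, hsz⟩ := exists_proj0_mul_notMem_of_notMem_liftIdeal h.2
  have hry0 := mem_R0_of_proj0_notMem (G.mul_mem_homogeneous hr hy) hry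
  have hsz0 := mem_R0_of_proj0_notMem (G.mul_mem_homogeneous hs hz) hsz
  refine Ideal.IsPrime.mul_notMem ‹_› hry hsz ?_
  have hry' : G.proj0 (r * y) = ⟨r * y, hry0⟩ := G.proj0_coe ⟨_, hry0⟩
  have hsz' : G.proj0 (s * z) = ⟨s * z, hsz0⟩ := G.proj0_coe ⟨_, hsz0⟩
  rw [hry', hsz', ← G.proj0_coe (_ * _)]
  convert hrs (y * z) using 2
  push_cast
  ring

lemma liftIdeal_comap {P : Ideal R} (hP : G.IsGradedPrime P) :
    G.liftIdeal (P.comap G.toSubring.subtype) = P := by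
  ext x
  refine ⟨fun hx => ?_, fun hx y => coe_proj0_mem_of_isGradedIdeal G hP.1 (P.mul_mem_right y hx)⟩
  set x₁ := x - G.proj0 x
  have hx₁ : x₁ ∈ G.R1 := G.sub_proj0_mem_R1 x
  have h0 : (G.proj0 x : R) ∈ P := by simpa using hx 1
  have h1 : x₁ * x₁ ∈ P := by
    have hsplit : x * x₁ = G.proj0 x * x₁ + (x₁ * x₁ : R) := by ring
    simpa [hsplit, G.proj0_of_mem_R1 (G.mul_mem_01 (G.proj0 x).2 hx₁),
      G.proj0_coe ⟨_, G.mul_mem_11 hx₁ hx₁⟩] using hx x₁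
  have h1' : x₁ ∈ P := (hP.2.2 _ (Or.inr hx₁) _ (Or.inr hx₁) h1).elim id id
  simpa [x₁] using P.add_mem h0 h1'

lemma le_liftIdeal_iff {I : Ideal R} {p : Ideal G.toSubring} :
    I ≤ G.liftIdeal p ↔ G.proj0 '' I ⊆ p := by
  refine ⟨?_, fun h x hx y => h ⟨_, I.mul_mem_right y hx, rfl⟩⟩
  rintro h _ ⟨x, hx, rfl⟩
  simpa using h hx 1

variable (G)

def gradedSpecEquiv : {Q : Ideal R // G.IsGradedPrime Q} ≃ PrimeSpectrum G.toSubring where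
  toFun P := ⟨P.1.comap G.toSubring.subtype, G.comap_isPrime P.2⟩
  invFun p := ⟨G.liftIdeal p.asIdeal, isGradedPrime_liftIdeal p.asIdeal⟩
  left_inv P := Subtype.ext (liftIdeal_comap P.2)
  right_inv p := PrimeSpectrum.ext (comap_liftIdeal p.asIdeal)

section Topology

attribute [local instance] gradedZariski

lemma isOpen_setOf_not_le {I : Ideal R} (hI : G.IsGradedIdeal I) :
    IsOpen {P : {Q : Ideal R // G.IsGradedPrime Q} | ¬ I ≤ P.1} :=
  TopologicalSpace.isOpen_generateFrom_of_mem ⟨I, hI, rfl⟩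

lemma continuous_gradedSpecEquiv : Continuous G.gradedSpecEquiv := by
  refine PrimeSpectrum.isTopologicalBasis_basic_opens.continuous_iff.mpr ?_
  rintro _ ⟨a, rfl⟩
  convert G.isOpen_setOf_not_le (G.isGradedIdeal_span_singleton (Or.inl a.2)) using 1
  ext P
  simp [gradedSpecEquiv]

lemma continuous_gradedSpecEquiv_symm : Continuous G.gradedSpecEquiv.symm := by
  refine continuous_generateFrom_iff.mpr ?_
  rintro _ ⟨I, -, rfl⟩
  have hpre : G.gradedSpecEquiv.symm ⁻¹' {P | ¬ I ≤ P.1} =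
      (PrimeSpectrum.zeroLocus (G.proj0 '' I))ᶜ := by
    ext p
    simp [gradedSpecEquiv, le_liftIdeal_iff]
  rw [hpre]
  exact (PrimeSpectrum.isClosed_zeroLocus _).isOpen_compl

def gradedSpecHomeomorph : {Q : Ideal R // G.IsGradedPrime Q} ≃ₜ PrimeSpectrum G.toSubring where
  __ := G.gradedSpecEquiv
  continuous_toFun := G.continuous_gradedSpecEquiv
  continuous_invFun := G.continuous_gradedSpecEquiv_symm

end Topology

end Z2Grading

/-- the map `P ↦ P ∩ R₀` is a homeomorphism from the homogeneous spectrum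
`Z₂Spec R` (with its Zariski topology) onto `Spec R₀` (with its Zariski topology). -/
theorem homeomorph_gradedSpec_spec {R : Type*} [CommRing R] (G : Z2Grading R) :
    ∃ f : @Homeomorph {Q : Ideal R // G.IsGradedPrime Q} (PrimeSpectrum G.toSubring)
        G.gradedZariski inferInstance,
      ∀ P : {Q : Ideal R // G.IsGradedPrime Q},
        (f P).asIdeal = Ideal.comap G.toSubring.subtype P.1 :=
  ⟨G.gradedSpecHomeomorph, fun _ => rfl⟩
end

section
/- Let G be an abelian group, R a G-graded commutative ring and I a G-graded ideal of R. Then the graded radical Grad(I) equals the intersection of all G-graded prime ideals of R containing I. -/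
namespace Ideal

open SetLike

variable {ι σ A : Type*} [AddMonoid ι] [DecidableEq ι] [CommRing A] [SetLike σ A]
  [AddSubmonoidClass σ A] (𝒜 : ι → σ) [GradedRing 𝒜]

/-- Graded primality only tests products of homogeneous elements; for a grading by a group with
torsion it is strictly weaker than primality. -/
def IsGradedPrime (P : Ideal A) : Prop :=
  P.IsHomogeneous 𝒜 ∧ P ≠ ⊤ ∧
    ∀ r s : A, IsHomogeneousElem 𝒜 r → IsHomogeneousElem 𝒜 s → r * s ∈ P → r ∈ P ∨ s ∈ P

def gradedRadical (I : Ideal A) : Set A :=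
  {x : A | ∀ g : ι, (DirectSum.decompose 𝒜 x g : A) ∈ I.radical}

variable {𝒜}

theorem IsGradedPrime.mem_of_pow_mem {P : Ideal A} (hP : P.IsGradedPrime 𝒜) {r : A}
    (hr : IsHomogeneousElem 𝒜 r) : ∀ {n : ℕ}, r ^ n ∈ P → r ∈ P
  | 0, h => absurd (P.eq_top_of_isUnit_mem h (pow_zero r ▸ isUnit_one)) hP.2.1
  | n + 1, h => by
    obtain ⟨i, hi⟩ := hr
    rw [pow_succ'] at h
    exact (hP.2.2 r (r ^ n) ⟨i, hi⟩ ⟨n • i, pow_mem_graded n hi⟩ h).elim id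
      (hP.mem_of_pow_mem ⟨i, hi⟩)

theorem IsPrime.isGradedPrime_homogeneousCore {p : Ideal A} (hp : p.IsPrime) :
    (p.homogeneousCore 𝒜).toIdeal.IsGradedPrime 𝒜 :=
  ⟨(p.homogeneousCore 𝒜).isHomogeneous,
    ne_top_of_le_ne_top hp.ne_top (p.toIdeal_homogeneousCore_le 𝒜),
    fun _ _ hr hs hrs => (hp.mem_or_mem (p.toIdeal_homogeneousCore_le 𝒜 hrs)).imp
      (mem_homogeneousCore_of_homogeneous_of_mem hr) (mem_homogeneousCore_of_homogeneous_of_mem hs)⟩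

theorem gradedRadical_subset {I P : Ideal A} (hP : P.IsGradedPrime 𝒜) (hIP : I ≤ P) :
    I.gradedRadical 𝒜 ⊆ P := by
  classical
  intro x hx
  rw [← DirectSum.sum_support_decompose 𝒜 x]
  refine sum_mem _ fun g _ => ?_
  obtain ⟨n, hn⟩ := hx g
  exact hP.mem_of_pow_mem ⟨g, SetLike.coe_mem _⟩ (hIP hn)

/-- Every prime `p ⊇ I` contains the graded prime `p.homogeneousCore 𝒜 ⊇ I`, which then contains
all homogeneous components of `x`. -/
theorem mem_gradedRadical_of_forall_isGradedPrime {I : Ideal A} (hI : I.IsHomogeneous 𝒜) {x : A}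
    (hx : ∀ P : Ideal A, P.IsGradedPrime 𝒜 → I ≤ P → x ∈ P) : x ∈ I.gradedRadical 𝒜 := by
  intro g
  rw [radical_eq_sInf, Submodule.mem_sInf]
  rintro (p : Ideal A) ⟨hIp, hp⟩
  have hI_le_core : I ≤ (p.homogeneousCore 𝒜).toIdeal :=
    hI.toIdeal_homogeneousCore_eq_self.symm.trans_le (homogeneousCore_mono 𝒜 hIp)
  have hx_core := hx _ hp.isGradedPrime_homogeneousCore hI_le_core
  exact p.toIdeal_homogeneousCore_le 𝒜 ((p.homogeneousCore 𝒜).isHomogeneous g hx_core)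

end Ideal

/-- for a `G`-graded commutative ring `R` (here graded by an abelian group
`ι`) and a `G`-graded ideal `I`, the graded radical `Grad(I)` equals the intersection of
all `G`-graded prime ideals of `R` containing `I`. -/
theorem gradedRadical_eq_sInf {ι R : Type*} [AddCommGroup ι] [DecidableEq ι] [CommRing R]
    (𝒜 : ι → AddSubgroup R) [GradedRing 𝒜] (I : Ideal R) (hI : I.IsHomogeneous 𝒜) :
    {x : R | ∀ g : ι, (DirectSum.decompose 𝒜 x g : R) ∈ I.radical} =
      ⋂ P ∈ {P : Ideal R | P.IsHomogeneous 𝒜 ∧ P ≠ ⊤ ∧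
        (∀ r s : R, SetLike.IsHomogeneousElem 𝒜 r → SetLike.IsHomogeneousElem 𝒜 s →
          r * s ∈ P → r ∈ P ∨ s ∈ P) ∧ I ≤ P}, (P : Set R) := by
  refine Set.Subset.antisymm (Set.subset_iInter₂ ?_) fun x hx => ?_
  · rintro P ⟨hhom, hne, hprime, hIP⟩
    exact Ideal.gradedRadical_subset ⟨hhom, hne, hprime⟩ hIP
  · refine Ideal.mem_gradedRadical_of_forall_isGradedPrime hI fun P hP hIP => ?_
    exact Set.mem_iInter₂.1 hx P ⟨hP.1, hP.2.1, hP.2.2, hIP⟩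
end

section
/- Let R = R₀ ⊕ R₁ be a Z₂-graded commutative ring and P a Z₂-graded prime ideal of R. Then P = p + R₁[p], where p = P ∩ R₀ and R₁[p] = {x ∈ R₁ : x² ∈ p}. -/
theorem Z2Grading.IsGradedPrime.mem_of_mul_self_mem {R : Type*} [CommRing R] {G : Z2Grading R}
    {P : Ideal R} (hP : G.IsGradedPrime P) {x : R} (hx : x ∈ G.homogeneous) (hxx : x * x ∈ P) :
    x ∈ P :=
  (hP.2.2 x hx x hx hxx).elim id id

/-- if `P` is a `ℤ₂`-graded prime ideal of `R` and `p = P ∩ R₀`, then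
`P = p + R₁[p]` where `R₁[p] = {x ∈ R₁ : x² ∈ p}`. -/
theorem graded_prime_eq_sum {R : Type*} [CommRing R] (G : Z2Grading R) (P : Ideal R)
    (hP : G.IsGradedPrime P) :
    (P : Set R) = setSum ((P : Set R) ∩ ↑G.R0)
      {x : R | x ∈ G.R1 ∧ x * x ∈ (P : Set R) ∩ ↑G.R0} := by
  ext x
  constructor
  · intro hx
    obtain ⟨a, b, ha0, hb1, haP, hbP, rfl⟩ := hP.1 x hx
    exact ⟨a, ⟨haP, ha0⟩, b, ⟨hb1, P.mul_mem_left b hbP, G.mul_mem_11 hb1 hb1⟩, rfl⟩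
  · rintro ⟨a, ⟨haP, -⟩, b, ⟨hb1, hbbP, -⟩, rfl⟩
    exact P.add_mem haP (hP.mem_of_mul_self_mem (Or.inr hb1) hbbP)
end

section
/- Let R = R₀ ⊕ R₁ be a Z₂-graded commutative ring. Then R is a Z₂-graded integral domain if and only if either (1) R₁ = 0 and R₀ is an integral domain, or (2) the zero submodule is a prime R₀-submodule of R₁, (0 :_{R₀} R₁) = 0, and R₁³ ≠ 0. -/
theorem mulSet_eq_bot_iff {R : Type*} [CommRing R] {S T : Set R} :
    mulSet S T = ⊥ ↔ ∀ a ∈ S, ∀ b ∈ T, a * b = 0 := by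
  simp only [mulSet, AddSubgroup.closure_eq_bot_iff, Set.subset_def, Set.mem_ofPred_eq]
  exact ⟨fun h a ha b hb => h _ ⟨a, ha, b, hb, rfl⟩, fun h _ ⟨a, ha, b, hb, hx⟩ => hx ▸ h a ha b hb⟩

namespace Z2Grading

variable {R : Type*} [CommRing R] (G : Z2Grading R)

def NoZeroSMulDivisors1 : Prop :=
  ∀ a ∈ G.R0, ∀ m ∈ G.R1, a * m = 0 → a = 0 ∨ m = 0

theorem isGradedDomain_iff : G.IsGradedDomain ↔
    (1 : R) ≠ 0 ∧ (∀ a ∈ G.R0, ∀ b ∈ G.R0, a * b = 0 → a = 0 ∨ b = 0) ∧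
      G.NoZeroSMulDivisors1 ∧ ∀ r ∈ G.R1, ∀ s ∈ G.R1, r * s = 0 → r = 0 ∨ s = 0 := by
  simp only [IsGradedDomain, NoZeroSMulDivisors1, homogeneous, Set.mem_union, SetLike.mem_coe,
    or_imp, forall_and]
  refine and_congr_right fun _ => ⟨fun ⟨⟨h00, _⟩, h01, h11⟩ => ⟨h00, h01, h11⟩, ?_⟩
  rintro ⟨h00, h01, h11⟩
  exact ⟨⟨h00, fun r hr s hs hrs => (h01 s hs r hr (by rwa [mul_comm])).symm⟩, h01, h11⟩

theorem isGradedDomain_iff_of_R1_eq_zero (hR1 : (G.R1 : Set R) = {0}) : G.IsGradedDomain ↔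
    (1 : R) ≠ 0 ∧ ∀ a ∈ G.R0, ∀ b ∈ G.R0, a * b = 0 → a = 0 ∨ b = 0 := by
  have hzero : ∀ m ∈ G.R1, m = 0 := fun m hm => (hR1 ▸ hm : m ∈ ({0} : Set R))
  simp +contextual [isGradedDomain_iff, NoZeroSMulDivisors1, hzero]

theorem isPrimeSubmodule1_bot_and_residual_bot_iff {m : R} (hm : m ∈ G.R1) (hm0 : m ≠ 0) :
    G.IsPrimeSubmodule1 ⊥ ∧ G.residual ⊥ = ⊥ ↔ G.NoZeroSMulDivisors1 := by
  have mem_residual_bot (a : R) : a ∈ G.residual ⊥ ↔ a ∈ G.R0 ∧ ∀ r ∈ G.R1, a * r = 0 := by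
    simp [residual]
  constructor
  · rintro ⟨⟨-, -, hprime⟩, hres⟩ a ha n hn han
    simpa [hres] using hprime a ha n hn (AddSubgroup.mem_bot.2 han)
  · intro h
    refine ⟨⟨⟨?_, ?_⟩, ?_, ?_⟩, ?_⟩
    · simp [G.R1.zero_mem]
    · simp
    · intro hbot
      have : m ∈ ((⊥ : AddSubgroup R) : Set R) := hbot ▸ hm
      exact hm0 (by simpa using this)
    · intro a ha n hn han
      rcases h a ha n hn (AddSubgroup.mem_bot.1 han) with rfl | rfl
      · exact Or.inl (G.residual ⊥).zero_mem
      · exact Or.inr (⊥ : AddSubgroup R).zero_mem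
    · refine (AddSubgroup.eq_bot_iff_forall _).2 fun a ha => ?_
      rw [mem_residual_bot] at ha
      exact (h a ha.1 m hm (ha.2 m hm)).resolve_right hm0

theorem mul_mem_sq {m n : R} (hm : m ∈ G.R1) (hn : n ∈ G.R1) : m * n ∈ G.sq :=
  AddSubgroup.subset_closure ⟨m, hm, n, hn, rfl⟩

theorem mul_mem_cube {a m : R} (ha : a ∈ G.sq) (hm : m ∈ G.R1) : a * m ∈ G.cube :=
  AddSubgroup.subset_closure ⟨a, ha, m, hm, rfl⟩

theorem exists_mul_ne_zero_of_cube_ne_bot (hcube : G.cube ≠ ⊥) :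
    ∃ m ∈ G.R1, ∃ n ∈ G.R1, m * n ≠ 0 := by
  by_contra! h
  have hsq : G.sq = ⊥ := mulSet_eq_bot_iff.2 h
  refine hcube (mulSet_eq_bot_iff.2 fun a ha _ _ => ?_)
  rw [AddSubgroup.mem_bot.1 (hsq ▸ ha : a ∈ (⊥ : AddSubgroup R)), zero_mul]

namespace NoZeroSMulDivisors1

variable {G}

theorem eq_zero_or_eq_zero_of_mul_eq_zero₀ (h : G.NoZeroSMulDivisors1) {m : R} (hm : m ∈ G.R1)
    (hm0 : m ≠ 0) : ∀ a ∈ G.R0, ∀ b ∈ G.R0, a * b = 0 → a = 0 ∨ b = 0 := by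
  intro a ha b hb hab
  refine or_iff_not_imp_left.2 fun ha0 => ?_
  have ham : a * m ≠ 0 := fun h0 => (h a ha m hm h0).elim ha0 hm0
  have hbam : b * (a * m) = 0 := by rw [← mul_assoc, mul_comm b, hab, zero_mul]
  exact (h b hb _ (G.mul_mem_01 ha hm) hbam).resolve_right ham

theorem eq_zero_or_eq_zero_of_mul_eq_zero₁ (h : G.NoZeroSMulDivisors1) {m n : R}
    (hm : m ∈ G.R1) (hn : n ∈ G.R1) (hmn : m * n ≠ 0) :
    ∀ r ∈ G.R1, ∀ s ∈ G.R1, r * s = 0 → r = 0 ∨ s = 0 := by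
  intro r hr s hs hrs
  refine or_iff_not_imp_left.2 fun hr0 => ?_
  -- `(m * n) * r = (r * m) * n`, and the left side is nonzero
  have hrm : r * m ≠ 0 := fun h0 =>
    (h _ (G.mul_mem_11 hm hn) r hr (by rw [mul_right_comm, mul_comm m r, h0, zero_mul])).elim
      hmn hr0
  have hrms : r * m * s = 0 := by rw [mul_right_comm, hrs, zero_mul]
  exact (h _ (G.mul_mem_11 hr hm) s hs hrms).resolve_left hrm

end NoZeroSMulDivisors1

theorem isGradedDomain_iff_of_ne_zero {m : R} (hm : m ∈ G.R1) (hm0 : m ≠ 0) :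
    G.IsGradedDomain ↔ G.NoZeroSMulDivisors1 ∧ G.cube ≠ ⊥ := by
  rw [isGradedDomain_iff]
  constructor
  · rintro ⟨-, -, h, h11⟩
    have hmm : m * m ≠ 0 := fun h0 => (h11 m hm m hm h0).elim hm0 hm0
    have hmmm : m * m * m ≠ 0 := fun h0 => (h _ (G.mul_mem_11 hm hm) m hm h0).elim hmm hm0
    exact ⟨h, fun hcube => hmmm (AddSubgroup.mem_bot.1
      (hcube ▸ G.mul_mem_cube (G.mul_mem_sq hm hm) hm))⟩
  · rintro ⟨h, hcube⟩
    obtain ⟨n, hn, k, hk, hnk⟩ := G.exists_mul_ne_zero_of_cube_ne_bot hcube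
    exact ⟨fun h1 => hnk (by rw [← mul_one (n * k), h1, mul_zero]),
      h.eq_zero_or_eq_zero_of_mul_eq_zero₀ hm hm0, h,
      h.eq_zero_or_eq_zero_of_mul_eq_zero₁ hn hk hnk⟩

end Z2Grading

/-- `R` is a `ℤ₂`-graded integral domain iff either `R₁ = 0` and `R₀` is an
integral domain, or `0` is a prime `R₀`-submodule of `R₁` with `(0 :_{R₀} R₁) = 0` and
`R₁³ ≠ 0`. -/
theorem graded_domain_iff {R : Type*} [CommRing R] (G : Z2Grading R) :
    G.IsGradedDomain ↔
      ((G.R1 : Set R) = {0} ∧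
        ((1 : R) ≠ 0 ∧ ∀ a ∈ G.R0, ∀ b ∈ G.R0, a * b = 0 → a = 0 ∨ b = 0)) ∨
      (G.IsPrimeSubmodule1 ⊥ ∧ G.residual ⊥ = (⊥ : AddSubgroup R) ∧
        G.cube ≠ (⊥ : AddSubgroup R)) := by
  by_cases hR1 : (G.R1 : Set R) = {0}
  · have hbot : ¬ G.IsPrimeSubmodule1 ⊥ := fun h => h.2.1 (by rw [hR1, AddSubgroup.coe_bot])
    simp only [G.isGradedDomain_iff_of_R1_eq_zero hR1, hR1, hbot, true_and, false_and, or_false]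
  · obtain ⟨m, hm, hm0⟩ : ∃ m ∈ G.R1, m ≠ 0 := by
      by_contra! h
      exact hR1 (Set.eq_singleton_iff_unique_mem.2 ⟨G.R1.zero_mem, h⟩)
    simp only [hR1, false_and, false_or]
    rw [G.isGradedDomain_iff_of_ne_zero hm hm0, ← and_assoc,
      G.isPrimeSubmodule1_bot_and_residual_bot_iff hm hm0]
end
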